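/- arXiv:2406.03561 — 2 statements merged into one kernel-verified Lean document; each statement's English description precedes it below -/
import Mathlib

section
/- If a graph G on n vertices has a Hamiltonian cycle, then E(G) ≥ n. -/
open Finset Matrix

noncomputable section

variable {V : Type*} [Fintype V] [DecidableEq V]

/-- The adjacency matrix of a simple graph is Hermitian (over ℝ). -/
theorem SimpleGraph.isHermitian_adjMatrix' (G : SimpleGraph V) [DecidableRel G.Adj] :
    (G.adjMatrix ℝ).IsHermitian := by
  rw [Matrix.IsHermitian, Matrix.conjTranspose_eq_transpose_of_trivial]
  exact G.isSymm_adjMatrix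

/-- The energy of a graph: the sum of the absolute values of the
eigenvalues of its adjacency matrix. -/
def SimpleGraph.energy (G : SimpleGraph V) [DecidableRel G.Adj] : ℝ :=
  ∑ k, |G.isHermitian_adjMatrix'.eigenvalues k|

/-- The Randić index of a graph: the sum over the (unordered) edges `(i,j)`
of `1/√(deg i · deg j)`. -/
def SimpleGraph.randic (G : SimpleGraph V) [DecidableRel G.Adj] : ℝ :=
  ∑ e ∈ G.edgeFinset,
    Sym2.lift ⟨fun i j => 1 / Real.sqrt (G.degree i * G.degree j),
      fun i j => by simp [mul_comm]⟩ e

end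

/-!
Let `H` be the spanning subgraph formed by the edges of the Hamiltonian cycle: it is 2-regular
and `H ≤ G`, so `tr (A_H A_G) = ∑ᵥ deg_H v = 2n`. Expanding the trace in an orthonormal eigenbasis
`(uₖ)` of `A_G` gives `tr (A_H A_G) = ∑ₖ λₖ ⟪uₖ, A_H uₖ⟫`, and `|⟪x, A_H x⟫| ≤ 2 ‖x‖²` because the
rows of `A_H` sum to 2. Hence `2n ≤ 2 ∑ₖ |λₖ| = 2 E(G)`.
-/

namespace Matrix

variable {n : Type*} [Fintype n]

theorem abs_dotProduct_mulVec_le_of_sum_abs_le {B : Matrix n n ℝ} (hB : B.IsSymm) {d : ℝ}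
    (hrow : ∀ i, ∑ j, |B i j| ≤ d) (x : n → ℝ) :
    |x ⬝ᵥ B *ᵥ x| ≤ d * (x ⬝ᵥ x) := by
  have hcol : ∑ i, ∑ j, |B i j| * x j ^ 2 = ∑ i, ∑ j, |B i j| * x i ^ 2 := by
    rw [Finset.sum_comm]
    simp_rw [← hB.apply]
  calc |x ⬝ᵥ B *ᵥ x| = |∑ i, ∑ j, B i j * (x i * x j)| := by
        simp only [dotProduct, mulVec, mul_sum]
        congr 1; refine sum_congr rfl fun i _ => sum_congr rfl fun j _ => by ring
    _ ≤ ∑ i, ∑ j, |B i j * (x i * x j)| :=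
        (abs_sum_le_sum_abs _ _).trans (sum_le_sum fun i _ => abs_sum_le_sum_abs _ _)
    _ ≤ ∑ i, ∑ j, (|B i j| * x i ^ 2 + |B i j| * x j ^ 2) / 2 := by
        gcongr with i _ j _
        rw [abs_mul, abs_mul, ← mul_add, mul_div_assoc]
        gcongr
        nlinarith [sq_nonneg (|x i| - |x j|), sq_abs (x i), sq_abs (x j)]
    _ = ∑ i, (∑ j, |B i j|) * x i ^ 2 := by
        simp only [← sum_div, sum_add_distrib, hcol, sum_mul]
        ring
    _ ≤ ∑ i, d * x i ^ 2 := by gcongr with i; exact hrow i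
    _ = d * (x ⬝ᵥ x) := by simp only [dotProduct, mul_sum, sq]

variable {𝕜 : Type*} [RCLike 𝕜] [DecidableEq n]

theorem trace_eq_sum_star_dotProduct_mulVec (M : Matrix n n 𝕜)
    (b : OrthonormalBasis n 𝕜 (EuclideanSpace 𝕜 n)) :
    M.trace = ∑ i, star ⇑(b i) ⬝ᵥ M *ᵥ ⇑(b i) := by
  have htrace : LinearMap.trace 𝕜 _ (toEuclideanLin M) = M.trace := by
    rw [toEuclideanLin, toLpLin_eq_toLin, trace_toLin_eq]
  rw [← htrace, LinearMap.trace_eq_sum_inner _ b]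
  simp [EuclideanSpace.inner_eq_star_dotProduct, toLpLin_apply, dotProduct_comm]

theorem IsHermitian.trace_mul_eq_sum_eigenvalues_mul {A : Matrix n n 𝕜} (hA : A.IsHermitian)
    (B : Matrix n n 𝕜) :
    (B * A).trace = ∑ i, (hA.eigenvalues i : 𝕜) *
      (star ⇑(hA.eigenvectorBasis i) ⬝ᵥ B *ᵥ ⇑(hA.eigenvectorBasis i)) := by
  rw [trace_eq_sum_star_dotProduct_mulVec _ hA.eigenvectorBasis]
  refine sum_congr rfl fun i _ => ?_
  rw [← mulVec_mulVec, hA.mulVec_eigenvectorBasis, mulVec_smul, dotProduct_smul,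
    RCLike.real_smul_eq_coe_mul]

theorem IsHermitian.abs_trace_mul_le_of_sum_abs_le {A B : Matrix n n ℝ} (hA : A.IsHermitian)
    (hB : B.IsSymm) {d : ℝ} (hrow : ∀ i, ∑ j, |B i j| ≤ d) :
    |(B * A).trace| ≤ d * ∑ i, |hA.eigenvalues i| := by
  have hunit : ∀ i, ⇑(hA.eigenvectorBasis i) ⬝ᵥ ⇑(hA.eigenvectorBasis i) = 1 := fun i => by
    have h := real_inner_self_eq_norm_sq (hA.eigenvectorBasis i)
    rw [hA.eigenvectorBasis.orthonormal.1 i, EuclideanSpace.inner_eq_star_dotProduct] at h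
    simpa using h
  rw [hA.trace_mul_eq_sum_eigenvalues_mul, mul_sum]
  refine (abs_sum_le_sum_abs _ _).trans (sum_le_sum fun i _ => ?_)
  have hquad := abs_dotProduct_mulVec_le_of_sum_abs_le hB hrow (hA.eigenvectorBasis i)
  rw [hunit, mul_one] at hquad
  rw [star_trivial, abs_mul, mul_comm d, RCLike.ofReal_real_eq_id, id]
  exact mul_le_mul_of_nonneg_left hquad (abs_nonneg _)

end Matrix

namespace SimpleGraph

variable {V : Type*}

theorem Walk.IsHamiltonianCycle.isRegularOfDegree_two [DecidableEq V] {G : SimpleGraph V}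
    {u : V} {w : G.Walk u u} (hw : w.IsHamiltonianCycle) [w.toSubgraph.spanningCoe.LocallyFinite] :
    w.toSubgraph.spanningCoe.IsRegularOfDegree 2 := fun v => by
  rw [← card_neighborSet_eq_degree, Set.fintypeCard_eq_ncard]
  exact hw.isCycle.ncard_neighborSet_toSubgraph_eq_two (hw.mem_support v)

variable [Fintype V]

theorem trace_adjMatrix_mul_adjMatrix_of_le {α : Type*} [NonAssocSemiring α]
    {H G : SimpleGraph V} [DecidableRel H.Adj] [DecidableRel G.Adj] (h : H ≤ G) :
    (H.adjMatrix α * G.adjMatrix α).trace = ∑ v, (H.degree v : α) := by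
  refine sum_congr rfl fun v _ => ?_
  rw [diag_apply, adjMatrix_mul_apply, ← card_neighborFinset_eq_degree, card_eq_sum_ones,
    Nat.cast_sum, Nat.cast_one]
  refine sum_congr rfl fun u hu => ?_
  rw [adjMatrix_apply, if_pos (h ((mem_neighborFinset H v u).mp hu).symm)]

theorem card_le_energy_of_isRegularOfDegree_le [DecidableEq V] {H G : SimpleGraph V}
    [DecidableRel H.Adj] [DecidableRel G.Adj] (h : H ≤ G) {d : ℕ} (hH : H.IsRegularOfDegree d)
    (hd : d ≠ 0) :
    (Fintype.card V : ℝ) ≤ G.energy := by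
  have htrace : (H.adjMatrix ℝ * G.adjMatrix ℝ).trace = d * Fintype.card V := by
    simp [trace_adjMatrix_mul_adjMatrix_of_le h, hH _, mul_comm]
  have hrow : ∀ i, ∑ j, |H.adjMatrix ℝ i j| ≤ d := fun i => by
    simp [apply_ite, sum_boole, ← hH i, ← card_neighborFinset_eq_degree,
      neighborFinset_eq_filter]
  have hbound := G.isHermitian_adjMatrix'.abs_trace_mul_le_of_sum_abs_le H.isSymm_adjMatrix hrow
  rw [htrace, abs_of_nonneg (by positivity)] at hbound
  exact le_of_mul_le_mul_left hbound (by positivity)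

end SimpleGraph

/-- If a graph `G` on `n` vertices has a Hamiltonian cycle, then `E(G) ≥ n`. -/
theorem stmt9 {n : ℕ} (G : SimpleGraph (Fin n)) [DecidableRel G.Adj]
    (u : Fin n) (w : G.Walk u u) (hw : w.IsHamiltonianCycle) :
    (n : ℝ) ≤ G.energy := by
  classical
  simpa using SimpleGraph.card_le_energy_of_isRegularOfDegree_le w.toSubgraph.spanningCoe_le
    hw.isRegularOfDegree_two two_ne_zero
end

section
/- If a graph G on n vertices has a Hamiltonian path, then E(G) ≥ n − 3 + 2√2. -/
open Finset Matrix

/-!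
For a subgraph `H ≤ G`, the Randić matrix `R` of `H` (entries `1 / √(dᵢ dⱼ)` on the edges of `H`)
has numerical range in `[-1, 1]`, while `tr (A(G) R) = 2 R(H)`. Writing `A(G)` in an orthonormal
eigenbasis gives `tr (A(G) R) ≤ ∑ |λᵢ| = E(G)`, so `E(G) ≥ 2 R(H)`. A Hamiltonian path is a
spanning subgraph all of whose degrees are `1` or `2`, with `n - 1` edges; for such graphs
`1 / √(ab) ≥ (√2 - 1)(1/a + 1/b) + 3/2 - √2` on every edge `ab`, and summing over the edges
(where the terms `1/a + 1/b` add up to `n`) gives `2 R(H) ≥ n - 3 + 2√2`.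
-/

namespace Matrix

variable {ι : Type*} [Fintype ι] [DecidableEq ι]

theorem IsHermitian.trace_mul_le_sum_abs_eigenvalues {A B : Matrix ι ι ℝ} (hA : A.IsHermitian)
    (hB : ∀ x, |x ⬝ᵥ B *ᵥ x| ≤ x ⬝ᵥ x) :
    (A * B).trace ≤ ∑ i, |hA.eigenvalues i| := by
  set U : Matrix ι ι ℝ := (hA.eigenvectorUnitary : Matrix ι ι ℝ)
  let u i : ι → ℝ := hA.eigenvectorBasis i
  have hU : U * star U = 1 := Unitary.coe_mul_star_self _
  have hu : ∀ i, u i ⬝ᵥ u i = 1 := fun i => by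
    have h := real_inner_self_eq_norm_sq (hA.eigenvectorBasis i)
    rw [hA.eigenvectorBasis.orthonormal.1 i, EuclideanSpace.inner_eq_star_dotProduct] at h
    simpa [u] using h
  have htrace : (A * B).trace = ∑ i, hA.eigenvalues i * (u i ⬝ᵥ B *ᵥ u i) := by
    rw [trace_mul_comm, ← Matrix.mul_one (B * A), ← hU, ← Matrix.mul_assoc, trace_mul_cycle]
    refine Finset.sum_congr rfl fun i _ => ?_
    have hcol : Uᵀ i = u i := hA.eigenvectorUnitary_transpose_apply i
    simp only [diag_apply, mul_mul_apply, ← mulVec_mulVec]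
    rw [star_eq_conjTranspose, conjTranspose_eq_transpose_of_trivial, hcol,
      hA.mulVec_eigenvectorBasis, mulVec_smul, dotProduct_smul, smul_eq_mul]
  rw [htrace]
  refine Finset.sum_le_sum fun i _ => ?_
  calc hA.eigenvalues i * (u i ⬝ᵥ B *ᵥ u i)
      ≤ |hA.eigenvalues i| * |u i ⬝ᵥ B *ᵥ u i| := by rw [← abs_mul]; exact le_abs_self _
    _ ≤ |hA.eigenvalues i| * 1 := by gcongr; exact (hB (u i)).trans (hu i).le
    _ = |hA.eigenvalues i| := mul_one _

end Matrix

-- Equality holds at `(1, 2)` and `(2, 2)`, the degree pairs met along a long path.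
theorem le_one_div_sqrt_mul_of_mem_Icc {a b : ℕ} (ha : a ∈ Set.Icc 1 2) (hb : b ∈ Set.Icc 1 2) :
    (√2 - 1) * (1 / a + 1 / b) + (3 / 2 - √2) ≤ 1 / √(a * b) := by
  obtain ⟨ha1, ha2⟩ := ha
  obtain ⟨hb1, hb2⟩ := hb
  have h2 : √2 * √2 = 2 := Real.mul_self_sqrt zero_le_two
  have hlt : √2 < 3 / 2 := by nlinarith [Real.sqrt_nonneg 2]
  have hinv : 1 / √2 = √2 / 2 := by field_simp; linarith
  have h4 : √(2 * 2) = 2 := Real.sqrt_mul_self zero_le_two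
  interval_cases a <;> interval_cases b <;> push_cast <;>
    simp only [mul_one, one_mul, h4, hinv, Real.sqrt_one] <;> linarith

namespace SimpleGraph

variable {V : Type*}

section Sums

variable [Fintype V] (H : SimpleGraph V) [DecidableRel H.Adj]

theorem sum_sum_ite_adj_eq_two_nsmul_sum_edgeFinset [DecidableEq V] {M : Type*}
    [AddCommMonoid M] (f : {f : V → V → M // ∀ a b, f a b = f b a}) :
    ∑ i, ∑ j, (if H.Adj i j then f.1 i j else 0) = 2 • ∑ e ∈ H.edgeFinset, Sym2.lift f e := by
  set darts : Finset (V × V) := {p | H.Adj p.1 p.2}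
  have hfiber : ∀ e ∈ H.edgeFinset,
      ∑ p ∈ darts with s(p.1, p.2) = e, f.1 p.1 p.2 = 2 • Sym2.lift f e := by
    intro e he
    induction e using Sym2.ind with | h a b => ?_
    have hab : H.Adj a b := by simpa using he
    have : ({p ∈ darts | s(p.1, p.2) = s(a, b)} : Finset (V × V)) = {(a, b), (b, a)} := by
      ext ⟨x, y⟩
      simp only [darts, mem_filter, mem_univ, true_and, Sym2.eq_iff, mem_insert, mem_singleton,
        Prod.mk.injEq]
      constructor
      · rintro ⟨-, h⟩
        exact h
      · rintro (⟨rfl, rfl⟩ | ⟨rfl, rfl⟩)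
        · exact ⟨hab, Or.inl ⟨rfl, rfl⟩⟩
        · exact ⟨hab.symm, Or.inr ⟨rfl, rfl⟩⟩
    rw [this, sum_pair (by simp [hab.ne]), f.2 b a, two_nsmul]
    rfl
  rw [smul_sum, ← sum_congr rfl hfiber,
    sum_fiberwise_of_maps_to (fun p hp => by simpa [darts] using hp),
    sum_filter, ← univ_product_univ, sum_product]

theorem sum_ite_adj_const (i : V) (c : ℝ) :
    ∑ j, (if H.Adj i j then c else 0) = H.degree i * c := by
  rw [← sum_filter, sum_const, ← neighborFinset_eq_filter, card_neighborFinset_eq_degree,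
    nsmul_eq_mul]

theorem sum_sum_ite_adj_comm {M : Type*} [AddCommMonoid M] (f : V → V → M) :
    ∑ i, ∑ j, (if H.Adj i j then f i j else 0) = ∑ i, ∑ j, (if H.Adj i j then f j i else 0) := by
  rw [sum_comm]
  simp_rw [H.adj_comm]

theorem abs_sum_sum_ite_adj_mul_le (y : V → ℝ) :
    |∑ i, ∑ j, (if H.Adj i j then y i * y j else 0)| ≤ ∑ i, H.degree i * y i ^ 2 := by
  have hsplit : ∀ i j, (if H.Adj i j then (y i ^ 2 + y j ^ 2) / 2 else 0) =
      ((if H.Adj i j then y i ^ 2 else 0) + (if H.Adj i j then y j ^ 2 else 0)) / 2 := by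
    intro i j
    split_ifs <;> ring
  calc |∑ i, ∑ j, (if H.Adj i j then y i * y j else 0)|
      ≤ ∑ i, ∑ j, (if H.Adj i j then (y i ^ 2 + y j ^ 2) / 2 else 0) := by
        refine (abs_sum_le_sum_abs _ _).trans (sum_le_sum fun i _ =>
          (abs_sum_le_sum_abs _ _).trans (sum_le_sum fun j _ => ?_))
        split_ifs
        · rw [abs_mul, le_div_iff₀ two_pos, ← sq_abs (y i), ← sq_abs (y j)]
          nlinarith [sq_nonneg (|y i| - |y j|)]
        · simp
    _ = ∑ i, ∑ j, (if H.Adj i j then y i ^ 2 else 0) := by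
        simp_rw [hsplit, ← sum_div, sum_add_distrib,
          ← H.sum_sum_ite_adj_comm (fun i _ => y i ^ 2)]
        exact add_self_div_two _
    _ = ∑ i, H.degree i * y i ^ 2 := sum_congr rfl fun i _ => H.sum_ite_adj_const i _

end Sums

section Randic

variable [Fintype V] (H : SimpleGraph V) [DecidableRel H.Adj]

noncomputable def randicMatrix : Matrix V V ℝ :=
  Matrix.of fun i j => if H.Adj i j then 1 / √(H.degree i * H.degree j) else 0

theorem abs_dotProduct_randicMatrix_mulVec_le (x : V → ℝ) :
    |x ⬝ᵥ H.randicMatrix *ᵥ x| ≤ x ⬝ᵥ x := by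
  set y : V → ℝ := fun i => x i / √(H.degree i)
  have hform : x ⬝ᵥ H.randicMatrix *ᵥ x = ∑ i, ∑ j, (if H.Adj i j then y i * y j else 0) := by
    simp only [dotProduct, mulVec, mul_sum]
    refine sum_congr rfl fun i _ => sum_congr rfl fun j _ => ?_
    simp only [randicMatrix, of_apply, y]
    split_ifs
    · rw [Real.sqrt_mul (Nat.cast_nonneg _)]
      ring
    · simp
  have hdeg : ∀ i, H.degree i * y i ^ 2 ≤ x i * x i := fun i => by
    calc H.degree i * y i ^ 2 = x i ^ 2 * (H.degree i / H.degree i) := by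
          rw [div_pow, Real.sq_sqrt (Nat.cast_nonneg _)]
          ring
      _ ≤ x i ^ 2 := mul_le_of_le_one_right (sq_nonneg _) (div_self_le_one _)
      _ = x i * x i := sq _
  rw [hform]
  exact (H.abs_sum_sum_ite_adj_mul_le y).trans (sum_le_sum fun i _ => hdeg i)

variable [DecidableEq V]

theorem sum_sum_randicMatrix : ∑ i, ∑ j, H.randicMatrix i j = 2 * H.randic := by
  rw [randic, two_mul, ← two_nsmul, ← sum_sum_ite_adj_eq_two_nsmul_sum_edgeFinset]
  rfl

theorem trace_adjMatrix_mul_randicMatrix {G : SimpleGraph V} [DecidableRel G.Adj] (h : H ≤ G) :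
    (G.adjMatrix ℝ * H.randicMatrix).trace = 2 * H.randic := by
  rw [← sum_sum_randicMatrix, trace]
  simp only [diag_apply, mul_apply]
  rw [sum_comm]
  refine sum_congr rfl fun i _ => sum_congr rfl fun j _ => ?_
  have hGH : H.Adj i j → G.Adj j i := fun hH => (h hH).symm
  simp only [randicMatrix, of_apply, adjMatrix_apply]
  split_ifs <;> simp_all

theorem two_mul_randic_le_energy {G : SimpleGraph V} [DecidableRel G.Adj] (h : H ≤ G) :
    2 * H.randic ≤ G.energy := by
  rw [← H.trace_adjMatrix_mul_randicMatrix h]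
  exact G.isHermitian_adjMatrix'.trace_mul_le_sum_abs_eigenvalues
    H.abs_dotProduct_randicMatrix_mulVec_le

theorem two_mul_randic_ge_of_degree_mem_Icc (hdeg : ∀ v, H.degree v ∈ Set.Icc 1 2) :
    2 * (√2 - 1) * Fintype.card V + (3 - 2 * √2) * #H.edgeFinset ≤ 2 * H.randic := by
  have hinv : ∑ i, ∑ j, (if H.Adj i j then 1 / (H.degree i : ℝ) else 0) = Fintype.card V := by
    simp_rw [sum_ite_adj_const]
    rw [Fintype.card_eq_sum_ones, Nat.cast_sum]
    refine sum_congr rfl fun i _ => ?_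
    have : (H.degree i : ℝ) ≠ 0 := by have := (hdeg i).1; positivity
    field_simp
    norm_num
  have hone : ∑ i, ∑ j, (if H.Adj i j then (1 : ℝ) else 0) = 2 * #H.edgeFinset := by
    simp_rw [sum_ite_adj_const, mul_one]
    exact_mod_cast H.sum_degrees_eq_twice_card_edges
  have hsplit : ∀ i j, (if H.Adj i j then
      (√2 - 1) * (1 / (H.degree i : ℝ) + 1 / H.degree j) + (3 / 2 - √2) else 0) =
      (√2 - 1) * (if H.Adj i j then 1 / (H.degree i : ℝ) else 0) +
      (√2 - 1) * (if H.Adj i j then 1 / (H.degree j : ℝ) else 0) +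
      (3 / 2 - √2) * (if H.Adj i j then 1 else 0) := by
    intro i j
    split_ifs <;> ring
  rw [← sum_sum_randicMatrix]
  calc 2 * (√2 - 1) * Fintype.card V + (3 - 2 * √2) * #H.edgeFinset
      = ∑ i, ∑ j, (if H.Adj i j then
          (√2 - 1) * (1 / (H.degree i : ℝ) + 1 / H.degree j) + (3 / 2 - √2) else 0) := by
        simp_rw [hsplit, sum_add_distrib, ← mul_sum]
        rw [← H.sum_sum_ite_adj_comm (fun i _ => 1 / (H.degree i : ℝ)), hinv, hone]
        ring
    _ ≤ ∑ i, ∑ j, H.randicMatrix i j := by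
        refine sum_le_sum fun i _ => sum_le_sum fun j _ => ?_
        simp only [randicMatrix, of_apply]
        split_ifs
        · exact_mod_cast le_one_div_sqrt_mul_of_mem_Icc (hdeg i) (hdeg j)
        · rfl

end Randic

section Paths

variable {G : SimpleGraph V}

theorem Walk.IsPath.ncard_neighborSet_toSubgraph_mem_Icc {u v x : V} {p : G.Walk u v}
    (hp : p.IsPath) (hnil : ¬ p.Nil) (hx : x ∈ p.support) :
    (p.toSubgraph.neighborSet x).ncard ∈ Set.Icc 1 2 := by
  obtain ⟨i, rfl, hi⟩ := Walk.mem_support_iff_exists_getVert.mp hx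
  rcases Nat.eq_zero_or_pos i with rfl | hi0
  · simp [hp.neighborSet_toSubgraph_startpoint hnil]
  rcases hi.eq_or_lt with rfl | hiL
  · simp [hp.neighborSet_toSubgraph_endpoint hnil]
  · simp [hp.ncard_neighborSet_toSubgraph_internal_eq_two hi0.ne' hiL]

variable [Fintype V]

theorem degree_eq_ncard_neighborSet (H : SimpleGraph V) [DecidableRel H.Adj] (x : V) :
    H.degree x = (H.neighborSet x).ncard := by
  rw [← card_neighborSet_eq_degree, Set.ncard_eq_toFinset_card', Set.toFinset_card]

theorem Walk.IsPath.card_edgeFinset_spanningCoe_toSubgraph [DecidableEq V] {u v : V}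
    {p : G.Walk u v} [DecidableRel p.toSubgraph.spanningCoe.Adj] (hp : p.IsPath) :
    #p.toSubgraph.spanningCoe.edgeFinset = p.length := by
  have : p.toSubgraph.spanningCoe.edgeFinset = p.edges.toFinset := by
    ext e
    simp
  rw [this, List.toFinset_card_of_nodup hp.edges_nodup, Walk.length_edges]

end Paths

end SimpleGraph

open SimpleGraph in
/-- If a graph `G` on `n ≥ 2` vertices has a Hamiltonian path, then
`E(G) ≥ n - 3 + 2√2`. -/
theorem stmt10 {n : ℕ} (hn : 2 ≤ n)
    (G : SimpleGraph (Fin n)) [DecidableRel G.Adj]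
    (u v : Fin n) (w : G.Walk u v) (hw : w.IsHamiltonian) :
    (n : ℝ) - 3 + 2 * Real.sqrt 2 ≤ G.energy := by
  classical
  set H := w.toSubgraph.spanningCoe
  have hlen : w.length = n - 1 := by simpa using hw.length_eq
  have hnil : ¬ w.Nil := by rw [Walk.not_nil_iff_lt_length]; omega
  have hdeg : ∀ x, H.degree x ∈ Set.Icc 1 2 := fun x => by
    rw [degree_eq_ncard_neighborSet]
    exact hw.isPath.ncard_neighborSet_toSubgraph_mem_Icc hnil (hw.mem_support x)
  have hedges : #H.edgeFinset = n - 1 :=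
    hw.isPath.card_edgeFinset_spanningCoe_toSubgraph.trans hlen
  calc (n : ℝ) - 3 + 2 * √2
      = 2 * (√2 - 1) * Fintype.card (Fin n) + (3 - 2 * √2) * #H.edgeFinset := by
        rw [hedges, Fintype.card_fin, Nat.cast_sub (by omega)]
        ring
    _ ≤ 2 * H.randic := H.two_mul_randic_ge_of_degree_mem_Icc hdeg
    _ ≤ G.energy := H.two_mul_randic_le_energy (Subgraph.spanningCoe_le _)
end
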